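/- Let E be a real normed vector space, J ⊆ ℝ an interval, σ : J → E a twice continuously differentiable curve and g : J → ℝ a continuous function such that σ''(s) = g(s)·σ'(s) for all s ∈ J. Fix s₀ ∈ J and assume σ'(s₀) ≠ 0. Then the image of σ is contained in a straight line: for every s ∈ J there exists r ∈ ℝ with σ(s) = σ(s₀) + r·σ'(s₀). In other words, a regular curve whose acceleration is everywhere proportional to its velocity has zero curvature and parametrizes a segment of an affine line. -/

import Mathlib

/-!
Multiplying the ODE `v' = g v` for the velocity `v = σ'` by the integrating factor `exp (-G)`,
with `G` a primitive of `g`, shows that `v s = exp (G s - G s₀) • v s₀` on the segment from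
`s₀` to `s`. So the velocity always points along `v s₀`, and integrating once more puts `σ s`
on the line through `σ s₀` with direction `v s₀`.
-/

open Set

theorem Convex.uniqueDiffOn_of_mem_of_ne {J : Set ℝ} (hJ : Convex ℝ J) {x y : ℝ}
    (hx : x ∈ J) (hy : y ∈ J) (hxy : x ≠ y) : UniqueDiffOn ℝ J := by
  refine uniqueDiffOn_convex hJ
    ⟨(x ⊓ y + x ⊔ y) / 2, interior_mono (s := Ioo (x ⊓ y) (x ⊔ y)) ?_ ?_⟩
  · exact Ioo_subset_Icc_self.trans (hJ.ordConnected.uIcc_subset hx hy)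
  · rw [isOpen_Ioo.interior_eq]
    have := min_lt_max.2 hxy
    constructor <;> linarith

theorem ContinuousOn.exists_forall_hasDerivWithinAt_Icc {a b : ℝ} (hab : a ≤ b) {g : ℝ → ℝ}
    (hg : ContinuousOn g (Icc a b)) :
    ∃ G : ℝ → ℝ, ∀ x ∈ Icc a b, HasDerivWithinAt G (g x) (Icc a b) x := by
  let g' := IccExtend hab ((Icc a b).domRestrict g)
  have hg' : Continuous g' := (continuousOn_iff_continuous_domRestrict.mp hg).Icc_extend'
  refine ⟨fun x ↦ ∫ t in a..x, g' t, fun x hx ↦ ?_⟩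
  have hgx : g' x = g x := IccExtend_of_mem _ _ hx
  simpa only [hgx] using (hg'.integral_hasStrictDerivAt a x).hasDerivAt.hasDerivWithinAt

section

variable {E : Type*} [NormedAddCommGroup E] [NormedSpace ℝ E]

theorem Convex.eq_of_forall_hasDerivWithinAt_zero {K : Set ℝ} (hK : Convex ℝ K) {f : ℝ → E}
    (hf : ∀ x ∈ K, HasDerivWithinAt f 0 K x) {x y : ℝ} (hx : x ∈ K) (hy : y ∈ K) :
    f x = f y := by
  have := hK.norm_image_sub_le_of_norm_hasDerivWithin_le hf (C := 0) (by simp) hy hx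
  rwa [zero_mul, norm_le_zero_iff, sub_eq_zero] at this

theorem Convex.eq_exp_smul_of_hasDerivWithinAt_eq_smul {K : Set ℝ} (hK : Convex ℝ K)
    {v : ℝ → E} {g G : ℝ → ℝ} (hG : ∀ x ∈ K, HasDerivWithinAt G (g x) K x)
    (hv : ∀ x ∈ K, HasDerivWithinAt v (g x • v x) K x) {x y : ℝ} (hx : x ∈ K) (hy : y ∈ K) :
    v x = Real.exp (G x - G y) • v y := by
  have hw : ∀ z ∈ K, HasDerivWithinAt (fun t ↦ Real.exp (-G t) • v t) 0 K z := fun z hz ↦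
    ((hG z hz).neg.exp.smul (hv z hz)).congr_deriv (by simp only [Pi.neg_apply]; module)
  have := hK.eq_of_forall_hasDerivWithinAt_zero hw hx hy
  rw [sub_eq_add_neg, Real.exp_add, mul_smul, ← this, smul_smul, ← Real.exp_add, add_neg_cancel,
    Real.exp_zero, one_smul]

theorem exists_eq_add_smul_of_hasDerivWithinAt_smul_const {a b : ℝ} (hab : a ≤ b) {σ : ℝ → E}
    {φ : ℝ → ℝ} {c : E} (hφ : ContinuousOn φ (Icc a b))
    (hσ : ∀ x ∈ Icc a b, HasDerivWithinAt σ (φ x • c) (Icc a b) x) {x y : ℝ}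
    (hx : x ∈ Icc a b) (hy : y ∈ Icc a b) : ∃ r : ℝ, σ x = σ y + r • c := by
  obtain ⟨Φ, hΦ⟩ := hφ.exists_forall_hasDerivWithinAt_Icc hab
  have hf : ∀ z ∈ Icc a b, HasDerivWithinAt (fun t ↦ σ t - Φ t • c) 0 (Icc a b) z := fun z hz ↦
    ((hσ z hz).sub ((hΦ z hz).smul_const c)).congr_deriv (sub_self _)
  have := (convex_Icc a b).eq_of_forall_hasDerivWithinAt_zero hf hx hy
  exact ⟨Φ x - Φ y, by linear_combination (norm := module) this⟩

theorem exists_eq_add_smul_deriv_of_hasDerivWithinAt_deriv_eq_smul {a b : ℝ} (hab : a ≤ b)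
    {σ v : ℝ → E} {g : ℝ → ℝ} (hg : ContinuousOn g (Icc a b))
    (hσ : ∀ x ∈ Icc a b, HasDerivWithinAt σ (v x) (Icc a b) x)
    (hv : ∀ x ∈ Icc a b, HasDerivWithinAt v (g x • v x) (Icc a b) x) {x y : ℝ}
    (hx : x ∈ Icc a b) (hy : y ∈ Icc a b) : ∃ r : ℝ, σ x = σ y + r • v y := by
  obtain ⟨G, hG⟩ := hg.exists_forall_hasDerivWithinAt_Icc hab
  have hvG : ∀ z ∈ Icc a b, v z = Real.exp (G z - G y) • v y := fun z hz ↦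
    (convex_Icc a b).eq_exp_smul_of_hasDerivWithinAt_eq_smul hG hv hz hy
  have hexp : ContinuousOn (fun z ↦ Real.exp (G z - G y)) (Icc a b) := fun z hz ↦
    ((hG z hz).continuousWithinAt.sub continuousWithinAt_const).rexp
  exact exists_eq_add_smul_of_hasDerivWithinAt_smul_const hab hexp
    (fun z hz ↦ hvG z hz ▸ hσ z hz) hx hy

end

theorem stmt14_general (E : Type*) [NormedAddCommGroup E] [NormedSpace ℝ E]
    (J : Set ℝ) (hJ : Convex ℝ J)
    (σ : ℝ → E) (g : ℝ → ℝ)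
    (hσ : ContDiffOn ℝ 2 σ J) (hg : ContinuousOn g J)
    (hode : ∀ s ∈ J, derivWithin (derivWithin σ J) J s = g s • derivWithin σ J s)
    (s₀ : ℝ) (hs₀ : s₀ ∈ J) :
    ∀ s ∈ J, ∃ r : ℝ, σ s = σ s₀ + r • derivWithin σ J s₀ := by
  intro s hs
  obtain rfl | hne := eq_or_ne s s₀
  · exact ⟨0, by simp⟩
  have hJu : UniqueDiffOn ℝ J := hJ.uniqueDiffOn_of_mem_of_ne hs hs₀ hne
  have hσ' : ∀ x ∈ J, HasDerivWithinAt σ (derivWithin σ J x) J x := fun x hx ↦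
    (hσ.differentiableOn (by norm_num) x hx).hasDerivWithinAt
  have hσ'' : ∀ x ∈ J, HasDerivWithinAt (derivWithin σ J) (g x • derivWithin σ J x) J x :=
    fun x hx ↦ hode x hx ▸ ((hσ.derivWithin hJu (m := 1) (by norm_num)).differentiableOn
      one_ne_zero x hx).hasDerivWithinAt
  have hK : uIcc s₀ s ⊆ J := hJ.ordConnected.uIcc_subset hs₀ hs
  exact exists_eq_add_smul_deriv_of_hasDerivWithinAt_deriv_eq_smul inf_le_sup (hg.mono hK)
    (fun x hx ↦ (hσ' x (hK hx)).mono hK) (fun x hx ↦ (hσ'' x (hK hx)).mono hK)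
    right_mem_uIcc left_mem_uIcc

/-- **Claim 5.3 of the paper.** Let `E` be a real normed vector space,
`J ⊆ ℝ` an interval, `σ : J → E` a twice continuously differentiable curve and `g : J → ℝ`
a continuous function with `σ''(s) = g(s)·σ'(s)` on `J`. If `s₀ ∈ J` and `σ'(s₀) ≠ 0`, then
the image of `σ` is contained in the straight line through `σ(s₀)` with direction `σ'(s₀)`:
a regular curve whose acceleration is everywhere proportional to its velocity has zero
curvature and parametrizes a segment of an affine line. -/
theorem stmt14 (E : Type*) [NormedAddCommGroup E] [NormedSpace ℝ E]
    (J : Set ℝ) (hJ : Convex ℝ J)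
    (σ : ℝ → E) (g : ℝ → ℝ)
    (hσ : ContDiffOn ℝ 2 σ J) (hg : ContinuousOn g J)
    (hode : ∀ s ∈ J, derivWithin (derivWithin σ J) J s = g s • derivWithin σ J s)
    (s₀ : ℝ) (hs₀ : s₀ ∈ J) (hreg : derivWithin σ J s₀ ≠ 0) :
    ∀ s ∈ J, ∃ r : ℝ, σ s = σ s₀ + r • derivWithin σ J s₀ :=
  stmt14_general E J hJ σ g hσ hg hode s₀ hs₀
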